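/- Let H₁ and H₂ be labelled balanced bipartite graphs with parts of sizes n₁ and n₂ that are regular of degrees d₁ and d₂ respectively (d₁, d₂ positive), and suppose each of the two labellings is either a matching ordering or a comatching ordering. Then H₁ ⋈ H₂ is a balanced bipartite graph with parts A₁ × A₂ and B₁ × B₂, each of size n₁·n₂, and H₁ ⋈ H₂ is regular of degree d₁ + d₂ − 1 if both labellings are matching orderings, and regular of degree d₁ + d₂ otherwise. -/

import Mathlib

/-! The neighbourhood of `(a_i, a_j)` in `H₁ ⋈ H₂` is the cross `{b_i} × N(a_j) ∪ N(a_i) × {b_j}`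
(dually for `(b_k, b_l)`). Its arms have `d₂` and `d₁` elements, and they meet, in the single
point `(b_i, b_j)`, exactly when `a_i b_i` and `a_j b_j` are both edges: always for two matching
orderings, never if one of the orderings is a comatching ordering. -/

/-- A graph on a sum type is (balanced) bipartite with the two summands as parts:
every edge joins a left vertex to a right vertex. -/
def IsBipSum {α β : Type*} (H : SimpleGraph (α ⊕ β)) : Prop :=
  (∀ i j, ¬ H.Adj (Sum.inl i) (Sum.inl j)) ∧ (∀ i j, ¬ H.Adj (Sum.inr i) (Sum.inr j))

/-- The labelling of a labelled balanced bipartite graph is a matching ordering: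
`a_i b_i` is an edge for every `i`. -/
def MatchingOrd {n : ℕ} (H : SimpleGraph (Fin n ⊕ Fin n)) : Prop :=
  ∀ i : Fin n, H.Adj (Sum.inl i) (Sum.inr i)

/-- The labelling of a labelled balanced bipartite graph is a comatching ordering:
`a_i b_i` is not an edge for any `i`. -/
def ComatchingOrd {n : ℕ} (H : SimpleGraph (Fin n ⊕ Fin n)) : Prop :=
  ∀ i : Fin n, ¬ H.Adj (Sum.inl i) (Sum.inr i)

/-- The balanced bipartite product `H₁ ⋈ H₂` of two labelled balanced bipartite graphs:
the vertex set is `(A₁ × A₂) ⊕ (B₁ × B₂)`, with `(a¹_i, a²_j)` adjacent to `(b¹_k, b²_l)`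
iff `i = k` and `a²_j b²_l ∈ E₂`, or `j = l` and `a¹_i b¹_k ∈ E₁`. -/
def bbProd {n₁ n₂ : ℕ} (H₁ : SimpleGraph (Fin n₁ ⊕ Fin n₁))
    (H₂ : SimpleGraph (Fin n₂ ⊕ Fin n₂)) :
    SimpleGraph ((Fin n₁ × Fin n₂) ⊕ (Fin n₁ × Fin n₂)) where
  Adj x y :=
    match x, y with
    | Sum.inl (i, j), Sum.inr (k, l) =>
        (i = k ∧ H₂.Adj (Sum.inl j) (Sum.inr l)) ∨ (j = l ∧ H₁.Adj (Sum.inl i) (Sum.inr k))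
    | Sum.inr (k, l), Sum.inl (i, j) =>
        (i = k ∧ H₂.Adj (Sum.inl j) (Sum.inr l)) ∨ (j = l ∧ H₁.Adj (Sum.inl i) (Sum.inr k))
    | _, _ => False
  symm := by
    constructor
    rintro (⟨i, j⟩ | ⟨i, j⟩) (⟨k, l⟩ | ⟨k, l⟩) h <;> exact h
  loopless := by
    constructor
    rintro (⟨i, j⟩ | ⟨i, j⟩) h <;> exact h

open Set

section Cross

variable {α β : Type*} [Finite α] [Finite β]

open Classical in
theorem ncard_singleton_prod_union_prod_singleton_add (i : α) (j : β) (S₁ : Set α) (S₂ : Set β) :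
    (({i} ×ˢ S₂) ∪ (S₁ ×ˢ {j})).ncard + (if i ∈ S₁ ∧ j ∈ S₂ then 1 else 0) =
      S₁.ncard + S₂.ncard := by
  have hinter : (({i} ×ˢ S₂) ∩ (S₁ ×ˢ {j})).ncard = if i ∈ S₁ ∧ j ∈ S₂ then 1 else 0 := by
    rw [prod_inter_prod, ncard_prod]
    split_ifs with h
    · simp [h.1, h.2]
    · rcases not_and_or.mp h with hi | hj
      · simp [hi]
      · simp [hj]
  rw [← hinter, ncard_union_add_ncard_inter, ncard_prod, ncard_prod]
  simp [add_comm]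

end Cross

section Bipartite

variable {α β : Type*} {H : SimpleGraph (α ⊕ β)}

theorem IsBipSum.neighborSet_inl (hb : IsBipSum H) (a : α) :
    H.neighborSet (Sum.inl a) = Sum.inr '' {b | H.Adj (Sum.inl a) (Sum.inr b)} := by
  ext (a' | b) <;> simp [hb.1 a]

theorem IsBipSum.neighborSet_inr (hb : IsBipSum H) (b : β) :
    H.neighborSet (Sum.inr b) = Sum.inl '' {a | H.Adj (Sum.inl a) (Sum.inr b)} := by
  ext (a | b') <;> simp [hb.2 b, H.adj_comm]

theorem IsBipSum.ncard_neighborSet_inl (hb : IsBipSum H) (a : α) :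
    (H.neighborSet (Sum.inl a)).ncard = {b | H.Adj (Sum.inl a) (Sum.inr b)}.ncard := by
  rw [hb.neighborSet_inl, ncard_image_of_injective _ Sum.inr_injective]

theorem IsBipSum.ncard_neighborSet_inr (hb : IsBipSum H) (b : β) :
    (H.neighborSet (Sum.inr b)).ncard = {a | H.Adj (Sum.inl a) (Sum.inr b)}.ncard := by
  rw [hb.neighborSet_inr, ncard_image_of_injective _ Sum.inl_injective]

end Bipartite

section Product

variable {n₁ n₂ : ℕ} (H₁ : SimpleGraph (Fin n₁ ⊕ Fin n₁)) (H₂ : SimpleGraph (Fin n₂ ⊕ Fin n₂))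

theorem isBipSum_bbProd : IsBipSum (bbProd H₁ H₂) :=
  ⟨fun _ _ h => h, fun _ _ h => h⟩

theorem bbProd_neighborSet_inl (i : Fin n₁) (j : Fin n₂) :
    (bbProd H₁ H₂).neighborSet (Sum.inl (i, j)) =
      Sum.inr '' (({i} ×ˢ {l | H₂.Adj (Sum.inl j) (Sum.inr l)}) ∪
        ({k | H₁.Adj (Sum.inl i) (Sum.inr k)} ×ˢ {j})) := by
  rw [(isBipSum_bbProd H₁ H₂).neighborSet_inl]
  congr 1
  ext ⟨k, l⟩
  simp [bbProd, and_comm, eq_comm]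

theorem bbProd_neighborSet_inr (k : Fin n₁) (l : Fin n₂) :
    (bbProd H₁ H₂).neighborSet (Sum.inr (k, l)) =
      Sum.inl '' (({k} ×ˢ {j | H₂.Adj (Sum.inl j) (Sum.inr l)}) ∪
        ({i | H₁.Adj (Sum.inl i) (Sum.inr k)} ×ˢ {l})) := by
  rw [(isBipSum_bbProd H₁ H₂).neighborSet_inr]
  congr 1
  ext ⟨i, j⟩
  simp [bbProd, and_comm, eq_comm]

variable {H₁ H₂} {d₁ d₂ : ℕ}

open Classical in
theorem bbProd_ncard_neighborSet_add (hb₁ : IsBipSum H₁) (hb₂ : IsBipSum H₂)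
    (hr₁ : ∀ v, (H₁.neighborSet v).ncard = d₁) (hr₂ : ∀ v, (H₂.neighborSet v).ncard = d₂)
    (v : (Fin n₁ × Fin n₂) ⊕ (Fin n₁ × Fin n₂)) :
    ∃ i j, ((bbProd H₁ H₂).neighborSet v).ncard +
      (if H₁.Adj (Sum.inl i) (Sum.inr i) ∧ H₂.Adj (Sum.inl j) (Sum.inr j) then 1 else 0) =
        d₁ + d₂ := by
  rcases v with ⟨i, j⟩ | ⟨k, l⟩
  · refine ⟨i, j, ?_⟩
    rw [bbProd_neighborSet_inl, ncard_image_of_injective _ Sum.inr_injective,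
      ← hr₁ (Sum.inl i), ← hr₂ (Sum.inl j), hb₁.ncard_neighborSet_inl, hb₂.ncard_neighborSet_inl]
    exact ncard_singleton_prod_union_prod_singleton_add i j _ _
  · refine ⟨k, l, ?_⟩
    rw [bbProd_neighborSet_inr, ncard_image_of_injective _ Sum.inl_injective,
      ← hr₁ (Sum.inr k), ← hr₂ (Sum.inr l), hb₁.ncard_neighborSet_inr, hb₂.ncard_neighborSet_inr]
    exact ncard_singleton_prod_union_prod_singleton_add k l _ _

end Product

theorem bbProd_regular_general {n₁ n₂ d₁ d₂ : ℕ}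
    (H₁ : SimpleGraph (Fin n₁ ⊕ Fin n₁)) (H₂ : SimpleGraph (Fin n₂ ⊕ Fin n₂))
    (hb₁ : IsBipSum H₁) (hb₂ : IsBipSum H₂)
    (ho₁ : MatchingOrd H₁ ∨ ComatchingOrd H₁)
    (ho₂ : MatchingOrd H₂ ∨ ComatchingOrd H₂)
    (hr₁ : ∀ v, (H₁.neighborSet v).ncard = d₁)
    (hr₂ : ∀ v, (H₂.neighborSet v).ncard = d₂) :
    IsBipSum (bbProd H₁ H₂) ∧
    Fintype.card (Fin n₁ × Fin n₂) = n₁ * n₂ ∧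
    ((MatchingOrd H₁ ∧ MatchingOrd H₂) →
      ∀ v, ((bbProd H₁ H₂).neighborSet v).ncard = d₁ + d₂ - 1) ∧
    (¬ (MatchingOrd H₁ ∧ MatchingOrd H₂) →
      ∀ v, ((bbProd H₁ H₂).neighborSet v).ncard = d₁ + d₂) := by
  refine ⟨isBipSum_bbProd H₁ H₂, by simp, ?_, ?_⟩
  · rintro ⟨hm₁, hm₂⟩ v
    obtain ⟨i, j, hdeg⟩ := bbProd_ncard_neighborSet_add hb₁ hb₂ hr₁ hr₂ v
    rw [if_pos ⟨hm₁ i, hm₂ j⟩] at hdeg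
    omega
  · intro hnm v
    obtain ⟨i, j, hdeg⟩ := bbProd_ncard_neighborSet_add hb₁ hb₂ hr₁ hr₂ v
    have hdiag : ¬ (H₁.Adj (Sum.inl i) (Sum.inr i) ∧ H₂.Adj (Sum.inl j) (Sum.inr j)) := by
      rintro ⟨h₁, h₂⟩
      by_cases hm₁ : MatchingOrd H₁
      · exact ho₂.resolve_left (fun hm₂ => hnm ⟨hm₁, hm₂⟩) j h₂
      · exact ho₁.resolve_left hm₁ i h₁
    rw [if_neg hdiag] at hdeg
    omega

/-- Proposition 7: the balanced bipartite product of regular balanced bipartite graphs,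
in matching or comatching orderings, is a regular balanced bipartite graph with parts
of size `n₁ * n₂`, of degree `d₁ + d₂ - 1` if both orderings are matching orderings,
and of degree `d₁ + d₂` otherwise. -/
theorem bbProd_regular {n₁ n₂ d₁ d₂ : ℕ} (hd₁ : 0 < d₁) (hd₂ : 0 < d₂)
    (H₁ : SimpleGraph (Fin n₁ ⊕ Fin n₁)) (H₂ : SimpleGraph (Fin n₂ ⊕ Fin n₂))
    (hb₁ : IsBipSum H₁) (hb₂ : IsBipSum H₂)
    (ho₁ : MatchingOrd H₁ ∨ ComatchingOrd H₁)
    (ho₂ : MatchingOrd H₂ ∨ ComatchingOrd H₂)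
    (hr₁ : ∀ v, (H₁.neighborSet v).ncard = d₁)
    (hr₂ : ∀ v, (H₂.neighborSet v).ncard = d₂) :
    IsBipSum (bbProd H₁ H₂) ∧
    Fintype.card (Fin n₁ × Fin n₂) = n₁ * n₂ ∧
    ((MatchingOrd H₁ ∧ MatchingOrd H₂) →
      ∀ v, ((bbProd H₁ H₂).neighborSet v).ncard = d₁ + d₂ - 1) ∧
    (¬ (MatchingOrd H₁ ∧ MatchingOrd H₂) →
      ∀ v, ((bbProd H₁ H₂).neighborSet v).ncard = d₁ + d₂) :=
  bbProd_regular_general H₁ H₂ hb₁ hb₂ ho₁ ho₂ hr₁ hr₂
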